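/- (Resolution of default cascades in the finite system.) Fix a time t and consider n banks with left-limit states X_i(t−) ≥ 0 for i in the alive set A_{t−} = {i : t ≤ τ_i}, vectors 𝐮_i, 𝐯_i ∈ ℝ^k with n^{-1}Σ_{l=1}^k v_{li}u_{jl} = λ_{ji} ≥ 0 for all i,j, the shift map Θ(t;f,y) := F(Σ_j y_j ∫₀^{t−}g d𝓛^n_j + g(t)f(y)) − F(Σ_j y_j ∫₀^{t−}g d𝓛^n_j) with F Lipschitz increasing, F(0)=0, and g nonnegative, and the update map Ξ(t;f,x) := Σ_{l=1}^k x_l (1/n)Σ_{j=1}^n u_{jl} 1{X_j(t−) ∈ [0, Θ(t;f,𝐯_j)], t ≤ τ_j}. Define the iterates Δ⁰_{t,v} := Ξ(t;0,v) and Δ^m_{t,v} := Ξ(t;Δ^{m−1}_{t,·},v). Then for each v the sequence (Δ^m_{t,v})_{m=0,…,n} is increasing in m, and there exists m̄ ≤ n such that Δ^m_{t,v} = Δ^{m̄}_{t,v} for all m ≥ m̄ and all v ∈ {𝐯₁,…,𝐯_n}, with Ξ(t;Δ^{m̄}_{t,·},v) = Δ^{m̄}_{t,v}; hence the cascade condition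 ΔL^n_v(t) := lim_{m→n} Δ^m_{t,v} is well-defined and the map v ↦ ΔL^n_v(t) is a fixed point of f ↦ Ξ(t;f,·). -/

import Mathlib

open scoped Classical

noncomputable section

/-- The shift map `Θ(t; f, y) = F(Σ_j y_j I_j + g(t)·f(y)) − F(Σ_j y_j I_j)`, where
`I_j = ∫₀^{t−} g d𝓛ⁿ_j` are the accumulated (left-limit) weighted losses. -/
def cascadeTheta (k : ℕ) (F : ℝ → ℝ) (gt : ℝ) (I : Fin k → ℝ)
    (f : (Fin k → ℝ) → ℝ) (y : Fin k → ℝ) : ℝ :=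
  F ((∑ j, y j * I j) + gt * f y) - F (∑ j, y j * I j)

/-- The cascade update map
`Ξ(t; f, x) = Σ_l x_l (1/n) Σ_j u_{jl} 1{X_j(t−) ∈ [0, Θ(t;f,v_j)], t ≤ τ_j}`,
where `alive j` encodes `t ≤ τ_j` and `ξ j = X_j(t−)`. -/
def cascadeXi (n k : ℕ) (F : ℝ → ℝ) (gt : ℝ) (I : Fin k → ℝ)
    (u v : Fin n → Fin k → ℝ) (alive : Fin n → Prop) (ξ : Fin n → ℝ)
    (f : (Fin k → ℝ) → ℝ) (x : Fin k → ℝ) : ℝ :=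
  ∑ l, x l * ((1 / (n : ℝ)) * ∑ j, u j l *
    (if alive j ∧ 0 ≤ ξ j ∧ ξ j ≤ cascadeTheta k F gt I f (v j) then 1 else 0))

/-- The cascade iterates `Δ⁰ = Ξ(t;0,·)`, `Δᵐ = Ξ(t;Δ^{m−1},·)`. -/
def cascadeDelta (n k : ℕ) (F : ℝ → ℝ) (gt : ℝ) (I : Fin k → ℝ)
    (u v : Fin n → Fin k → ℝ) (alive : Fin n → Prop) (ξ : Fin n → ℝ) :
    ℕ → (Fin k → ℝ) → ℝ
  | 0 => cascadeXi n k F gt I u v alive ξ (fun _ => 0)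
  | m + 1 => cascadeXi n k F gt I u v alive ξ
      (cascadeDelta n k F gt I u v alive ξ m)

end

/-!
`Ξ(t; f, ·)` depends on `f` only through the set of banks that default under the shift
`Θ(t; f, ·)`. The cascade is therefore the Kleene iteration, from `∅`, of the map sending a
default set `S` to the banks that default under the losses of `S`; this map is monotone because
`λ ≥ 0`, `F` is increasing and `g ≥ 0`. An increasing chain of subsets of the `n` banks can grow
strictly at most `n` times, so the iteration is stationary from round `n` on.
-/

open Finset Function

theorem Finset.iterate_empty_eq_of_card_le {α : Type*} [Fintype α] {G : Finset α → Finset α}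
    (hG : Monotone G) {m : ℕ} (hm : Fintype.card α ≤ m) :
    G^[m] ∅ = G^[Fintype.card α] ∅ := by
  have hmono : Monotone fun m => G^[m] ∅ := hG.monotone_iterate_of_le_map (empty_subset _)
  have hstab (m : ℕ) (h : #(G^[m] ∅) = #(G^[m + 1] ∅)) : #(G^[m + 1] ∅) = #(G^[m + 2] ∅) := by
    have hfix : G^[m] ∅ = G^[m + 1] ∅ := eq_of_subset_of_card_le (hmono m.le_succ) h.ge
    rwa [iterate_succ_apply' G (m + 1), ← hfix, ← iterate_succ_apply' G]
  have hcard : #(G^[m] ∅) = #(G^[Fintype.card α] ∅) :=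
    Nat.stabilises_of_monotone (fun _ _ h => card_le_card (hmono h)) (fun _ => card_le_univ _)
      hstab hm
  exact (eq_of_subset_of_card_le (hmono hm) hcard.le).symm

section Cascade

variable {n k : ℕ} {F : ℝ → ℝ} {gt : ℝ} {I : Fin k → ℝ} {u v : Fin n → Fin k → ℝ}
  {alive : Fin n → Prop} {ξ : Fin n → ℝ} {lam : Fin n → Fin n → ℝ}

noncomputable section

variable (F gt I v alive ξ) in
def cascadeDefaultSet (f : (Fin k → ℝ) → ℝ) : Finset (Fin n) :=
  univ.filter fun j => alive j ∧ 0 ≤ ξ j ∧ ξ j ≤ cascadeTheta k F gt I f (v j)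

variable (u) in
def cascadeLoss (S : Finset (Fin n)) (x : Fin k → ℝ) : ℝ :=
  ∑ l, x l * ((1 / (n : ℝ)) * ∑ j ∈ S, u j l)

variable (F gt I u v alive ξ) in
def cascadeRound (S : Finset (Fin n)) : Finset (Fin n) :=
  cascadeDefaultSet F gt I v alive ξ (cascadeLoss u S)

end

theorem cascadeXi_eq_cascadeLoss (f : (Fin k → ℝ) → ℝ) :
    cascadeXi n k F gt I u v alive ξ f = cascadeLoss u (cascadeDefaultSet F gt I v alive ξ f) := by
  ext x
  simp only [cascadeXi, cascadeLoss, cascadeDefaultSet, sum_filter, mul_ite, mul_one, mul_zero]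

theorem cascadeLoss_empty : cascadeLoss u ∅ = fun _ => 0 := by
  ext x
  simp [cascadeLoss]

theorem cascadeLoss_apply_eq_sum
    (hlam : ∀ i j : Fin n, (1 / (n : ℝ)) * ∑ l, v i l * u j l = lam j i)
    (S : Finset (Fin n)) (i : Fin n) :
    cascadeLoss u S (v i) = ∑ j ∈ S, lam j i := by
  simp only [cascadeLoss, mul_sum, ← hlam]
  rw [sum_comm]
  exact sum_congr rfl fun j _ => sum_congr rfl fun l _ => by ring

theorem cascadeLoss_apply_mono
    (hlam : ∀ i j : Fin n, (1 / (n : ℝ)) * ∑ l, v i l * u j l = lam j i)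
    (hlam_nonneg : ∀ i j : Fin n, 0 ≤ lam j i) {S S' : Finset (Fin n)} (h : S ⊆ S')
    (i : Fin n) : cascadeLoss u S (v i) ≤ cascadeLoss u S' (v i) := by
  rw [cascadeLoss_apply_eq_sum hlam, cascadeLoss_apply_eq_sum hlam]
  exact sum_le_sum_of_subset_of_nonneg h fun j _ _ => hlam_nonneg i j

theorem cascadeTheta_mono (hFmono : Monotone F) (hgt : 0 ≤ gt)
    {f f' : (Fin k → ℝ) → ℝ} {y : Fin k → ℝ} (h : f y ≤ f' y) :
    cascadeTheta k F gt I f y ≤ cascadeTheta k F gt I f' y :=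
  sub_le_sub_right (hFmono (by gcongr)) _

theorem cascadeDefaultSet_mono (hFmono : Monotone F) (hgt : 0 ≤ gt)
    {f f' : (Fin k → ℝ) → ℝ} (h : ∀ j, f (v j) ≤ f' (v j)) :
    cascadeDefaultSet F gt I v alive ξ f ⊆ cascadeDefaultSet F gt I v alive ξ f' := by
  intro j hj
  simp only [cascadeDefaultSet, mem_filter, mem_univ, true_and] at hj ⊢
  exact ⟨hj.1, hj.2.1, hj.2.2.trans (cascadeTheta_mono hFmono hgt (h j))⟩

theorem cascadeRound_monotone (hFmono : Monotone F) (hgt : 0 ≤ gt)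
    (hlam : ∀ i j : Fin n, (1 / (n : ℝ)) * ∑ l, v i l * u j l = lam j i)
    (hlam_nonneg : ∀ i j : Fin n, 0 ≤ lam j i) :
    Monotone (cascadeRound F gt I u v alive ξ) := fun _ _ h =>
  cascadeDefaultSet_mono hFmono hgt (cascadeLoss_apply_mono hlam hlam_nonneg h)

theorem cascadeDelta_eq_cascadeLoss_iterate (m : ℕ) :
    cascadeDelta n k F gt I u v alive ξ m =
      cascadeLoss u ((cascadeRound F gt I u v alive ξ)^[m + 1] ∅) := by
  induction m with
  | zero => simp [cascadeDelta, cascadeRound, cascadeXi_eq_cascadeLoss, cascadeLoss_empty]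
  | succ m ih =>
    rw [cascadeDelta, ih, cascadeXi_eq_cascadeLoss, iterate_succ_apply' _ (m + 1)]
    rfl

end Cascade

theorem finite_cascade_resolution_general
    (n k : ℕ)
    (F : ℝ → ℝ) (hFmono : Monotone F)
    (gt : ℝ) (hgt : 0 ≤ gt)
    (I : Fin k → ℝ)
    (u v : Fin n → Fin k → ℝ)
    (lam : Fin n → Fin n → ℝ)
    (hlam : ∀ i j : Fin n, (1 / (n : ℝ)) * ∑ l, v i l * u j l = lam j i)
    (hlam_nonneg : ∀ i j : Fin n, 0 ≤ lam j i)
    (alive : Fin n → Prop)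
    (ξ : Fin n → ℝ) :
    (∀ (i : Fin n) (m : ℕ),
        cascadeDelta n k F gt I u v alive ξ m (v i) ≤
          cascadeDelta n k F gt I u v alive ξ (m + 1) (v i)) ∧
    (∃ mbar : ℕ, mbar ≤ n ∧
      (∀ m : ℕ, mbar ≤ m → ∀ i : Fin n,
        cascadeDelta n k F gt I u v alive ξ m (v i) =
          cascadeDelta n k F gt I u v alive ξ mbar (v i)) ∧
      (∀ i : Fin n,
        cascadeXi n k F gt I u v alive ξ
            (cascadeDelta n k F gt I u v alive ξ mbar) (v i) =
          cascadeDelta n k F gt I u v alive ξ mbar (v i))) ∧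
    (∀ i : Fin n,
      cascadeXi n k F gt I u v alive ξ
          (cascadeDelta n k F gt I u v alive ξ n) (v i) =
        cascadeDelta n k F gt I u v alive ξ n (v i)) := by
  have hG := cascadeRound_monotone (I := I) (alive := alive) (ξ := ξ) hFmono hgt hlam hlam_nonneg
  have hstable (m : ℕ) (hm : n ≤ m) :
      cascadeDelta n k F gt I u v alive ξ m = cascadeDelta n k F gt I u v alive ξ n := by
    rw [cascadeDelta_eq_cascadeLoss_iterate, cascadeDelta_eq_cascadeLoss_iterate,
      iterate_empty_eq_of_card_le (m := m + 1) hG (by simp; omega),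
      iterate_empty_eq_of_card_le (m := n + 1) hG (by simp)]
  have hfixed (i : Fin n) :
      cascadeXi n k F gt I u v alive ξ (cascadeDelta n k F gt I u v alive ξ n) (v i) =
        cascadeDelta n k F gt I u v alive ξ n (v i) :=
    congrFun (hstable (n + 1) n.le_succ) (v i)
  refine ⟨fun i m => ?_, ⟨n, le_rfl, fun m hm i => by rw [hstable m hm], hfixed⟩, hfixed⟩
  rw [cascadeDelta_eq_cascadeLoss_iterate, cascadeDelta_eq_cascadeLoss_iterate]
  exact cascadeLoss_apply_mono hlam hlam_nonneg
    (hG.monotone_iterate_of_le_map (empty_subset _) (m + 1).le_succ) i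

/-- resolution of default cascades in the finite system: the cascade
iterates are increasing in `m` and stabilise after at most `n` rounds at a fixed point
of `Ξ(t;·,·)`; hence the cascade condition `ΔLⁿ_v(t) = lim_{m→n} Δᵐ_{t,v}` is
well-defined and `v ↦ ΔLⁿ_v(t)` is a fixed point of `f ↦ Ξ(t;f,·)`. -/
theorem finite_cascade_resolution
    (n k : ℕ) (hn : 0 < n)
    (F : ℝ → ℝ) (KF : NNReal) (hFlip : LipschitzWith KF F) (hFmono : Monotone F)
    (hF0 : F 0 = 0)
    (gt : ℝ) (hgt : 0 ≤ gt)
    (I : Fin k → ℝ) (hI : ∀ j, 0 ≤ I j)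
    (u v : Fin n → Fin k → ℝ)
    (lam : Fin n → Fin n → ℝ)
    (hlam : ∀ i j : Fin n, (1 / (n : ℝ)) * ∑ l, v i l * u j l = lam j i)
    (hlam_nonneg : ∀ i j : Fin n, 0 ≤ lam j i)
    (alive : Fin n → Prop)
    (ξ : Fin n → ℝ) (hξ : ∀ i, alive i → 0 ≤ ξ i) :
    (∀ (i : Fin n) (m : ℕ),
        cascadeDelta n k F gt I u v alive ξ m (v i) ≤
          cascadeDelta n k F gt I u v alive ξ (m + 1) (v i)) ∧
    (∃ mbar : ℕ, mbar ≤ n ∧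
      (∀ m : ℕ, mbar ≤ m → ∀ i : Fin n,
        cascadeDelta n k F gt I u v alive ξ m (v i) =
          cascadeDelta n k F gt I u v alive ξ mbar (v i)) ∧
      (∀ i : Fin n,
        cascadeXi n k F gt I u v alive ξ
            (cascadeDelta n k F gt I u v alive ξ mbar) (v i) =
          cascadeDelta n k F gt I u v alive ξ mbar (v i))) ∧
    (∀ i : Fin n,
      cascadeXi n k F gt I u v alive ξ
          (cascadeDelta n k F gt I u v alive ξ n) (v i) =
        cascadeDelta n k F gt I u v alive ξ n (v i)) :=
  finite_cascade_resolution_general n k F hFmono gt hgt I u v lam hlam hlam_nonneg alive ξ
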